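/- Let G be a finite group, r ∈ G, and z ∈ Z(r) (i.e. zr = rz). Let C_z be the conjugacy class of z in G and q : C_z → G a transversal with q(c)·z·q(c)⁻¹ = c for all c ∈ C_z. Let D be the conjugacy class of r in the group Z(z). Then, as functions G × G → ℂ, Σ_{c∈C_z} Σ_{d∈D} F^{q(c)·d·q(c)⁻¹, c} = (|D|/|Z(z)|)·Σ_{g∈G} F^{g·r·g⁻¹, g·z·g⁻¹}. -/

import Mathlib

/-! Writing `g = q(c) * w` with `c = g z g⁻¹` and `w ∈ Z(z)` parametrises `G` bijectively, and
turns the sum over `G` into a sum over `c ∈ C_z` and `w ∈ Z(z)` of `F^{q(c) (w r w⁻¹) q(c)⁻¹, c}`.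
As `w` runs through `Z(z)`, `w r w⁻¹` runs through `D`, hitting each element exactly
`|Z(z)| / |D|` times (orbit–stabilizer for `Z(z)` acting on `G` by conjugation). -/

open scoped Classical

noncomputable section

/-- `F^{g,h}`: the indicator function of the pair `(g,h)`. -/
def Fgh {G : Type*} (g h : G) : G × G → ℂ := fun x => if x = (g, h) then 1 else 0

/-- The conjugacy class of `r` in `G`, as a `Finset`. -/
def conjClass {G : Type*} [Group G] [Fintype G] (r : G) : Finset G :=
  Finset.image (fun g => g * r * g⁻¹) Finset.univ

/-- The centralizer `Z(r)` of `r` in `G`, as a `Finset`. -/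
def centFinset {G : Type*} [Group G] [Fintype G] (r : G) : Finset G :=
  Finset.univ.filter fun z => z * r = r * z

/-- The conjugacy class of `x` in the group `Z(r)`, as a `Finset` of `G`. -/
def conjClassIn {G : Type*} [Group G] [Fintype G] (r x : G) : Finset G :=
  (centFinset r).image fun w => w * x * w⁻¹

open Finset

theorem Finset.sum_comp_of_card_fiber_eq {ι κ M : Type*} [AddCommMonoid M] [DecidableEq κ]
    {s : Finset ι} {g : ι → κ} {k : ℕ} (hk : ∀ b ∈ s.image g, #{a ∈ s | g a = b} = k)
    (f : κ → M) : ∑ a ∈ s, f (g a) = k • ∑ b ∈ s.image g, f b := by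
  rw [sum_comp, smul_sum]
  exact sum_congr rfl fun b hb => by rw [hk b hb]

section ConjugationInSubgroup

variable {G : Type*} [Group G] [Fintype G] (H : Subgroup G) (r : G)

theorem card_conj_fiber_eq_card_stabilizer {w₀ : G} (hw₀ : w₀ ∈ H) :
    #{w ∈ (H : Set G).toFinset | w * r * w⁻¹ = w₀ * r * w₀⁻¹}
      = #{w ∈ (H : Set G).toFinset | w * r * w⁻¹ = r} := by
  refine card_nbij' (w₀⁻¹ * ·) (w₀ * ·) ?_ ?_ (fun _ _ => mul_inv_cancel_left _ _)
    (fun _ _ => inv_mul_cancel_left _ _)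
  · intro w hw
    simp only [coe_filter, Set.mem_toFinset, SetLike.mem_coe, Set.mem_ofPred_eq] at hw ⊢
    refine ⟨H.mul_mem (H.inv_mem hw₀) hw.1, ?_⟩
    calc w₀⁻¹ * w * r * (w₀⁻¹ * w)⁻¹ = w₀⁻¹ * (w * r * w⁻¹) * w₀ := by group
      _ = r := by rw [hw.2]; group
  · intro u hu
    simp only [coe_filter, Set.mem_toFinset, SetLike.mem_coe, Set.mem_ofPred_eq] at hu ⊢
    refine ⟨H.mul_mem hw₀ hu.1, ?_⟩
    calc w₀ * u * r * (w₀ * u)⁻¹ = w₀ * (u * r * u⁻¹) * w₀⁻¹ := by group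
      _ = w₀ * r * w₀⁻¹ := by rw [hu.2]

theorem sum_conj_subgroup {M : Type*} [AddCommMonoid M] (f : G → M) :
    ∑ w ∈ (H : Set G).toFinset, f (w * r * w⁻¹)
      = #{w ∈ (H : Set G).toFinset | w * r * w⁻¹ = r}
          • ∑ d ∈ (H : Set G).toFinset.image (fun w => w * r * w⁻¹), f d := by
  refine sum_comp_of_card_fiber_eq (fun d hd => ?_) f
  obtain ⟨w₀, hw₀, rfl⟩ := mem_image.mp hd
  exact card_conj_fiber_eq_card_stabilizer H r (Set.mem_toFinset.mp hw₀)

theorem card_subgroup_eq_card_stabilizer_mul_card_conj :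
    #(H : Set G).toFinset
      = #{w ∈ (H : Set G).toFinset | w * r * w⁻¹ = r}
          * #((H : Set G).toFinset.image (fun w => w * r * w⁻¹)) := by
  simpa only [← card_eq_sum_ones, smul_eq_mul] using sum_conj_subgroup H r (fun _ => (1 : ℕ))

end ConjugationInSubgroup

section Centralizer

variable {G : Type*} [Group G] [Fintype G]

theorem mem_centFinset {r w : G} : w ∈ centFinset r ↔ w * r = r * w := by
  simp [centFinset]

theorem centFinset_eq_toFinset_centralizer (r : G) :
    centFinset r = (Subgroup.centralizer {r} : Set G).toFinset := by
  ext w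
  rw [mem_centFinset, Set.mem_toFinset, SetLike.mem_coe, Subgroup.mem_centralizer_singleton_iff,
    eq_comm]

theorem conj_eq_iff_inv_mul_mem_centFinset {z g h : G} :
    g * z * g⁻¹ = h * z * h⁻¹ ↔ h⁻¹ * g ∈ centFinset z := by
  rw [mem_centFinset, mul_inv_eq_iff_eq_mul, show h * z * h⁻¹ * g = h * (z * (h⁻¹ * g)) by group,
    ← inv_mul_eq_iff_eq_mul, mul_assoc]

theorem conj_mul_of_mem_centFinset {z h w : G} (hw : w ∈ centFinset z) :
    h * w * z * (h * w)⁻¹ = h * z * h⁻¹ :=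
  conj_eq_iff_inv_mul_mem_centFinset.mpr (by rwa [inv_mul_cancel_left])

theorem sum_conj_centFinset {M : Type*} [AddCommMonoid M] (z r : G) (f : G → M) :
    ∑ w ∈ centFinset z, f (w * r * w⁻¹)
      = #{w ∈ centFinset z | w * r * w⁻¹ = r} • ∑ d ∈ conjClassIn z r, f d := by
  rw [conjClassIn, centFinset_eq_toFinset_centralizer]
  exact sum_conj_subgroup _ r f

theorem card_centFinset_eq_card_stabilizer_mul_card_conjClassIn (z r : G) :
    #(centFinset z) = #{w ∈ centFinset z | w * r * w⁻¹ = r} * #(conjClassIn z r) := by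
  rw [conjClassIn, centFinset_eq_toFinset_centralizer]
  exact card_subgroup_eq_card_stabilizer_mul_card_conj _ r

theorem sum_eq_sum_conjClass_sum_centFinset {M : Type*} [AddCommMonoid M] (z : G) (q : G → G)
    (hq : ∀ c ∈ conjClass z, q c * z * (q c)⁻¹ = c) (φ : G → M) :
    ∑ g, φ g = ∑ c ∈ conjClass z, ∑ w ∈ centFinset z, φ (q c * w) := by
  rw [← sum_fiberwise_of_maps_to (g := fun g => g * z * g⁻¹) (t := conjClass z)
    fun g _ => mem_image_of_mem _ (mem_univ g)]
  refine sum_congr rfl fun c hc => ?_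
  refine sum_nbij' ((q c)⁻¹ * ·) (q c * ·) ?_ ?_ (fun _ _ => mul_inv_cancel_left _ _)
    (fun _ _ => inv_mul_cancel_left _ _) (fun g _ => by rw [mul_inv_cancel_left])
  · intro g hg
    rw [← conj_eq_iff_inv_mul_mem_centFinset, (mem_filter.mp hg).2, hq c hc]
  · intro w hw
    refine mem_filter.mpr ⟨mem_univ _, ?_⟩
    exact (conj_mul_of_mem_centFinset hw).trans (hq c hc)

end Centralizer

theorem class_sum_identity_second_general (G : Type*) [Group G] [Fintype G]
    (r z : G)
    (q : G → G) (hq : ∀ c ∈ conjClass z, q c * z * (q c)⁻¹ = c) :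
    ∑ c ∈ conjClass z, ∑ d ∈ conjClassIn z r, Fgh (q c * d * (q c)⁻¹) c
      = (((conjClassIn z r).card : ℂ) / ((centFinset z).card : ℂ)) •
          ∑ g : G, Fgh (g * r * g⁻¹) (g * z * g⁻¹) := by
  set k := #{w ∈ centFinset z | w * r * w⁻¹ = r}
  have hsum : ∑ g : G, Fgh (g * r * g⁻¹) (g * z * g⁻¹)
      = k • ∑ c ∈ conjClass z, ∑ d ∈ conjClassIn z r, Fgh (q c * d * (q c)⁻¹) c :=
    calc ∑ g : G, Fgh (g * r * g⁻¹) (g * z * g⁻¹)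
        = ∑ c ∈ conjClass z, ∑ w ∈ centFinset z,
            Fgh (q c * w * r * (q c * w)⁻¹) (q c * w * z * (q c * w)⁻¹) :=
          sum_eq_sum_conjClass_sum_centFinset z q hq _
      _ = ∑ c ∈ conjClass z, ∑ w ∈ centFinset z, Fgh (q c * (w * r * w⁻¹) * (q c)⁻¹) c :=
          sum_congr rfl fun c hc => sum_congr rfl fun w hw => by
            rw [conj_mul_of_mem_centFinset hw, hq c hc]
            congr 1
            group
      _ = ∑ c ∈ conjClass z, k • ∑ d ∈ conjClassIn z r, Fgh (q c * d * (q c)⁻¹) c :=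
          sum_congr rfl fun c _ => sum_conj_centFinset z r fun d => Fgh (q c * d * (q c)⁻¹) c
      _ = _ := (smul_sum ..).symm
  have hZ : (#(centFinset z) : ℂ) ≠ 0 :=
    Nat.cast_ne_zero.mpr (card_ne_zero_of_mem (mem_centFinset.mpr (by rw [one_mul, mul_one])))
  have hfactor : (#(conjClassIn z r) : ℂ) / #(centFinset z) * k = 1 := by
    rw [div_mul_eq_mul_div, mul_comm, ← Nat.cast_mul,
      ← card_centFinset_eq_card_stabilizer_mul_card_conjClassIn, div_self hZ]
  rw [hsum, ← Nat.cast_smul_eq_nsmul ℂ, smul_smul, hfactor, one_smul]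

theorem class_sum_identity_second (G : Type*) [Group G] [Fintype G]
    (r z : G) (hz : z * r = r * z)
    (q : G → G) (hq : ∀ c ∈ conjClass z, q c * z * (q c)⁻¹ = c) :
    ∑ c ∈ conjClass z, ∑ d ∈ conjClassIn z r, Fgh (q c * d * (q c)⁻¹) c
      = (((conjClassIn z r).card : ℂ) / ((centFinset z).card : ℂ)) •
          ∑ g : G, Fgh (g * r * g⁻¹) (g * z * g⁻¹) :=
  class_sum_identity_second_general G r z q hq

end
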